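/- For all integers a ≥ 0 and b ≥ 0, the double integral identity (1/2) ∫_ℝ ∫_ℝ x^{2a} (y^{2b+1} − 2b·y^{2b−1}) sign(y − x) e^{−x²/2 − y²/2} dx dy = Γ(a + b + 1/2) holds (for b = 0 the term 2b·y^{2b−1} is interpreted as 0). -/

import Mathlib

/-!
Since `(y ^ (2b+1) - 2b y ^ (2b-1)) e^{-y²/2}` is minus the derivative of
`F y = y ^ (2b) e^{-y²/2}`, which vanishes at `±∞`, integrating it against `sign (y - x)` over
each half-line gives `F x` twice. The double integral thus collapses to
`∫ x ^ (2(a+b)) e^{-x²} dx`, which the substitution `t = x²` turns into `Γ(a + b + 1/2)`.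
-/

open MeasureTheory Real Set Filter Topology

lemma Real.measurable_sign : Measurable Real.sign :=
  Measurable.ite measurableSet_Iio measurable_const
    (Measurable.ite measurableSet_Ioi measurable_const measurable_const)

lemma Real.abs_sign_le_one (r : ℝ) : |Real.sign r| ≤ 1 := by
  rcases Real.sign_apply_eq r with h | h | h <;> simp [h]

theorem integral_mul_sign_sub_of_hasDerivAt {F f : ℝ → ℝ} (hderiv : ∀ t, HasDerivAt F (f t) t)
    (hf : Integrable f) (hbot : Tendsto F atBot (𝓝 0)) (htop : Tendsto F atTop (𝓝 0)) (x : ℝ) :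
    ∫ y, f y * Real.sign (y - x) = -2 * F x := by
  have hint : Integrable fun y => f y * Real.sign (y - x) :=
    hf.mul_bdd (Real.measurable_sign.comp (measurable_sub_const x)).aestronglyMeasurable
      (.of_forall fun y => Real.abs_sign_le_one (y - x))
  have hleft : ∫ y in Iic x, f y * Real.sign (y - x) = -F x := by
    calc ∫ y in Iic x, f y * Real.sign (y - x)
        = ∫ y in Iio x, -f y := by
          rw [integral_Iic_eq_integral_Iio]
          refine setIntegral_congr_fun measurableSet_Iio fun y hy => ?_
          simp [Real.sign_of_neg (sub_neg.mpr hy)]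
      _ = -F x := by
          rw [← integral_Iic_eq_integral_Iio, integral_neg,
            integral_Iic_of_hasDerivAt_of_tendsto' (fun t _ => hderiv t) hf.integrableOn hbot,
            sub_zero]
  have hright : ∫ y in Ioi x, f y * Real.sign (y - x) = -F x := by
    calc ∫ y in Ioi x, f y * Real.sign (y - x)
        = ∫ y in Ioi x, f y := by
          refine setIntegral_congr_fun measurableSet_Ioi fun y hy => ?_
          simp [Real.sign_of_pos (sub_pos.mpr hy)]
      _ = -F x := by
          rw [integral_Ioi_of_hasDerivAt_of_tendsto' (fun t _ => hderiv t) hf.integrableOn htop,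
            zero_sub]
  rw [← intervalIntegral.integral_Iic_add_Ioi hint.integrableOn hint.integrableOn, hleft, hright]
  ring

lemma integrable_pow_mul_exp_neg_mul_sq (n : ℕ) {c : ℝ} (hc : 0 < c) :
    Integrable fun t : ℝ => t ^ n * exp (-c * t ^ 2) := by
  simpa only [rpow_natCast] using
    integrable_rpow_mul_exp_neg_mul_sq hc (s := n) (neg_one_lt_zero.trans_le n.cast_nonneg)

lemma tendsto_pow_mul_exp_neg_mul_sq_cocompact (n : ℕ) {c : ℝ} (hc : 0 < c) :
    Tendsto (fun t : ℝ => t ^ n * exp (-c * t ^ 2)) (cocompact ℝ) (𝓝 0) := by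
  rw [tendsto_zero_iff_norm_tendsto_zero]
  simpa [abs_mul, abs_pow] using tendsto_rpow_abs_mul_exp_neg_mul_sq_cocompact hc n

lemma hasDerivAt_pow_mul_exp_neg_mul_sq (n : ℕ) (c t : ℝ) :
    HasDerivAt (fun t : ℝ => t ^ n * exp (-c * t ^ 2))
      ((n * t ^ (n - 1) - 2 * c * t ^ (n + 1)) * exp (-c * t ^ 2)) t := by
  have hexp : HasDerivAt (fun t : ℝ => -c * t ^ 2) (-2 * c * t) t :=
    ((hasDerivAt_pow 2 t).const_mul (-c)).congr_deriv (by ring)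
  refine ((hasDerivAt_pow n t).fun_mul hexp.exp).congr_deriv ?_
  rw [pow_succ]
  ring

lemma integral_pow_sub_mul_sign_sub_mul_exp_neg_sq_div_two (n : ℕ) (x : ℝ) :
    ∫ y : ℝ, (y ^ (n + 1) - n * y ^ (n - 1)) * Real.sign (y - x) * exp (-y ^ 2 / 2) =
      2 * (x ^ n * exp (-x ^ 2 / 2)) := by
  have hc : (0 : ℝ) < 1 / 2 := one_half_pos
  have hdecay := tendsto_pow_mul_exp_neg_mul_sq_cocompact n hc
  rw [cocompact_eq_atBot_atTop, tendsto_sup] at hdecay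
  have hf : Integrable fun t : ℝ =>
      (n * t ^ (n - 1) - 2 * (1 / 2) * t ^ (n + 1)) * exp (-(1 / 2) * t ^ 2) := by
    refine (((integrable_pow_mul_exp_neg_mul_sq (n - 1) hc).const_mul n).sub
      ((integrable_pow_mul_exp_neg_mul_sq (n + 1) hc).const_mul (2 * (1 / 2)))).congr
      (.of_forall fun t => ?_)
    simp only [Pi.sub_apply]
    ring
  have hftc := integral_mul_sign_sub_of_hasDerivAt
    (hasDerivAt_pow_mul_exp_neg_mul_sq n (1 / 2)) hf hdecay.1 hdecay.2 x
  have hsq : ∀ t : ℝ, -t ^ 2 / 2 = -(1 / 2) * t ^ 2 := fun t => by ring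
  simp_rw [hsq]
  calc _ = -∫ y : ℝ, (n * y ^ (n - 1) - 2 * (1 / 2) * y ^ (n + 1)) * exp (-(1 / 2) * y ^ 2) *
        Real.sign (y - x) := by
        rw [← integral_neg]
        exact integral_congr_ae (.of_forall fun y => by ring)
    _ = _ := by rw [hftc]; ring

lemma integral_even_pow_mul_exp_neg_sq (n : ℕ) :
    ∫ x : ℝ, x ^ (2 * n) * exp (-x ^ 2) = Gamma (n + 1 / 2) := by
  have hmoment := integral_rpow_mul_exp_neg_rpow two_pos
    (neg_one_lt_zero.trans_le (2 * n : ℕ).cast_nonneg)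
  simp only [rpow_natCast, rpow_two] at hmoment
  calc ∫ x : ℝ, x ^ (2 * n) * exp (-x ^ 2)
      = ∫ x : ℝ, |x| ^ (2 * n) * exp (-|x| ^ 2) := by simp [pow_mul]
    _ = 2 * ∫ x in Ioi (0 : ℝ), x ^ (2 * n) * exp (-x ^ 2) :=
        integral_comp_abs (f := fun x => x ^ (2 * n) * exp (-x ^ 2))
    _ = Gamma (n + 1 / 2) := by
        rw [hmoment]
        push_cast
        ring_nf

/-- The double integral identity
`(1/2) ∫∫ x^{2a} (y^{2b+1} - 2b y^{2b-1}) sign(y-x) e^{-x²/2-y²/2} dx dy = Γ(a+b+1/2)`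
(for `b = 0` the term `2b·y^{2b-1}` vanishes since its coefficient is `0`). -/
theorem skew_integral_gamma (a b : ℕ) :
    (1 / 2) * ∫ x : ℝ, ∫ y : ℝ,
        x ^ (2 * a) * (y ^ (2 * b + 1) - (2 * (b : ℝ)) * y ^ (2 * b - 1)) *
          Real.sign (y - x) * Real.exp (-x ^ 2 / 2 - y ^ 2 / 2) =
      Real.Gamma ((a : ℝ) + (b : ℝ) + 1 / 2) := by
  have hinner (x : ℝ) : ∫ y : ℝ,
      x ^ (2 * a) * (y ^ (2 * b + 1) - (2 * (b : ℝ)) * y ^ (2 * b - 1)) *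
        Real.sign (y - x) * Real.exp (-x ^ 2 / 2 - y ^ 2 / 2) =
      2 * (x ^ (2 * (a + b)) * exp (-x ^ 2)) := by
    have hy := integral_pow_sub_mul_sign_sub_mul_exp_neg_sq_div_two (2 * b) x
    push_cast at hy
    calc _ = x ^ (2 * a) * exp (-x ^ 2 / 2) *
          ∫ y : ℝ, (y ^ (2 * b + 1) - 2 * b * y ^ (2 * b - 1)) * Real.sign (y - x) *
            exp (-y ^ 2 / 2) := by
          rw [← integral_const_mul]
          refine integral_congr_ae (.of_forall fun y => ?_)
          dsimp only
          rw [show -x ^ 2 / 2 - y ^ 2 / 2 = -x ^ 2 / 2 + -y ^ 2 / 2 by ring, exp_add]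
          ring
      _ = 2 * (x ^ (2 * a + 2 * b) * exp (-x ^ 2 / 2 + -x ^ 2 / 2)) := by
          rw [hy, pow_add, exp_add]
          ring
      _ = _ := by ring_nf
  simp_rw [hinner]
  rw [integral_const_mul, integral_even_pow_mul_exp_neg_sq]
  push_cast
  ring_nf
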